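/- Let I be a countable index set, let (q_i)_{i∈I} be a family of (not necessarily distinct) primes, and let G = ⨁_{i∈I} ℤ/q_iℤ. Let X be an ergodic G-system, let F : X → S¹ be a phase polynomial of degree < k, let p be a prime with p ≥ k, and let m ≥ 1 be such that F(x)^{p^m} = 1 for μ-a.e. x. Then there exists a constant c ∈ S¹ such that (F(x) · conj(c))^p = 1 for μ-a.e. x; that is, up to multiplication by a constant, F takes values in the p-th roots of unity. -/

import Mathlib

/-!
Induct on `k`. If `F` has degree `< k + 1`, every derivative `Δ_g F` has degree `< k`, so by
induction `(Δ_g F)ᵖ = λ g` a.e. for a constant `λ g`, which is a `p ^ m`-th root of unity. When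
`p • g = 0`, expanding `F = F ∘ T_gᵖ = ∏ⱼ (Δ_gʲ F)^(p choose j)` and using `Δ_gᵖ F = 1` (as
`k ≤ p`) and `p ∣ p.choose j` for `0 < j < p` gives `λ g = 1`. In `⨁ ℤ/q_iℤ` every `g` has a
multiple `r • g` with `r` prime to `p` and `p • r • g = 0`, so `λ ≡ 1`: `Fᵖ` is invariant, takes
finitely many values, and is therefore a.e. constant by ergodicity. A `p`-th root of that
constant is the required `c`.
-/

open MeasureTheory
open scoped symmDiff

noncomputable instance : MeasurableSpace Circle := borel Circle
instance : BorelSpace Circle := ⟨rfl⟩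

/-- `φ : X → H` is a phase polynomial of degree `< k` with respect to the action `T` of `G`
on the measure space `(X, μ)`: all `k`-fold multiplicative derivatives
`Δ_{h₁} ⋯ Δ_{h_k} φ` equal `1` almost everywhere, where `Δ_g φ = (φ ∘ T_g) · φ⁻¹`. -/
def PhasePoly {G X H : Type*} [MeasurableSpace X] [CommGroup H]
    (T : G → X → X) (μ : Measure X) : ℕ → (X → H) → Prop
  | 0, φ => ∀ᵐ x ∂μ, φ x = 1
  | (k + 1), φ => ∀ g : G, PhasePoly T μ k (fun x => φ (T g x) * (φ x)⁻¹)

/-- The action `T` of `G` on `(X, μ)` is ergodic: every measurable set that is invariant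
modulo null sets under every `T g` has measure `0` or `1`. -/
def IsErgodicAction {G X : Type*} [MeasurableSpace X] (T : G → X → X)
    (μ : Measure X) : Prop :=
  ∀ A : Set X, MeasurableSet A → (∀ g : G, μ ((T g ⁻¹' A) ∆ A) = 0) → μ A = 0 ∨ μ A = 1


section MulDeriv

variable {X H : Type*} [CommGroup H]

/-- `Δ_f φ`; `PhasePoly T μ (k + 1) φ` unfolds definitionally to
`∀ g, PhasePoly T μ k (mulDeriv (T g) φ)`. -/
def mulDeriv (f : X → X) (φ : X → H) : X → H := fun x => φ (f x) * (φ x)⁻¹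

lemma apply_eq_mulDeriv_mul (f : X → X) (φ : X → H) (x : X) :
    φ (f x) = mulDeriv f φ x * φ x := by
  simp [mulDeriv]

lemma mulDeriv_pow (f : X → X) (φ : X → H) (n : ℕ) (x : X) :
    mulDeriv f (fun y => φ y ^ n) x = mulDeriv f φ x ^ n := by
  simp [mulDeriv, mul_pow, inv_pow]

lemma mulDeriv_comp (f g : X → X) (φ : X → H) (x : X) :
    mulDeriv (g ∘ f) φ x = mulDeriv g φ (f x) * mulDeriv f φ x := by
  simp [mulDeriv]

lemma apply_iterate_eq_prod_pow_choose (f : X → X) (n : ℕ) (φ : X → H) (x : X) :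
    φ (f^[n] x) = ∏ j ∈ Finset.range (n + 1), (mulDeriv f)^[j] φ x ^ n.choose j := by
  induction n generalizing x with
  | zero => simp
  | succ n ih =>
    rw [Function.iterate_succ_apply, ih,
      Finset.prod_pow_choose_succ (fun j _ => (mulDeriv f)^[j] φ x), ← Finset.prod_mul_distrib]
    refine Finset.prod_congr rfl fun j _ => ?_
    rw [← mul_pow, Function.iterate_succ_apply', mul_comm, ← apply_eq_mulDeriv_mul]

/-- `p` divides `p.choose j` for `0 < j < p`, so only the factor `j = 1` can survive. -/
lemma pow_eq_one_of_prod_pow_choose_eq {p : ℕ} (hp : p.Prime) (a : ℕ → H)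
    (hprod : ∏ j ∈ Finset.range (p + 1), a j ^ p.choose j = a 0)
    (ha : ∀ j, 2 ≤ j → a j ^ p = 1) (hap : a p = 1) : a 1 ^ p = 1 := by
  rw [Finset.prod_range_succ', Nat.choose_zero_right, pow_one, mul_eq_right] at hprod
  rw [← hprod, Finset.prod_eq_single_of_mem 0 (Finset.mem_range.mpr hp.pos)]
  · simp
  intro j hj hj0
  rcases (show j + 1 ≤ p from Finset.mem_range.mp hj).lt_or_eq with hjp | hjp
  · obtain ⟨b, hb⟩ := hp.dvd_choose_self j.succ_ne_zero hjp
    rw [hb, pow_mul, ha (j + 1) (by omega), one_pow]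
  · rw [hjp, hap, one_pow]

end MulDeriv

namespace MeasureTheory.MeasurePreserving

variable {X H : Type*} [CommGroup H] [MeasurableSpace X] {μ : Measure X} {f : X → X}

lemma ae_mulDeriv_eq_one (hf : MeasurePreserving f μ μ) {φ : X → H} {c : H}
    (h : ∀ᵐ x ∂μ, φ x = c) : ∀ᵐ x ∂μ, mulDeriv f φ x = 1 := by
  filter_upwards [h, hf.quasiMeasurePreserving.ae h] with x hx hfx
  simp [mulDeriv, hx, hfx]

lemma ae_pow_mulDeriv_eq_one (hf : MeasurePreserving f μ μ) {φ : X → H} {n : ℕ} {c : H}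
    (h : ∀ᵐ x ∂μ, φ x ^ n = c) : ∀ᵐ x ∂μ, mulDeriv f φ x ^ n = 1 := by
  simpa only [mulDeriv_pow] using hf.ae_mulDeriv_eq_one (φ := fun y => φ y ^ n) h

lemma ae_mulDeriv_iterate_eq_pow (hf : MeasurePreserving f μ μ) {φ : X → H} {c : H}
    (h : ∀ᵐ x ∂μ, mulDeriv f φ x = c) (n : ℕ) : ∀ᵐ x ∂μ, mulDeriv f^[n] φ x = c ^ n := by
  induction n with
  | zero => simp [mulDeriv]
  | succ n ih =>
    filter_upwards [hf.quasiMeasurePreserving.ae ih, h] with x hnx hx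
    rw [Function.iterate_succ, mulDeriv_comp, hnx, hx, pow_succ]

/-- Binomial expansion of `φ ∘ fᵖ = φ`; the derivatives `Δʲφ` with `j ≥ 2` have order dividing
`p` because `(Δφ)ᵖ` is a.e. constant. -/
lemma eq_one_of_iterate_eq_id [NeZero μ] (hf : MeasurePreserving f μ μ) {p : ℕ} (hp : p.Prime)
    (hfp : f^[p] = id) {φ : X → H} (hΔp : ∀ᵐ x ∂μ, (mulDeriv f)^[p] φ x = 1) {c : H}
    (hc : ∀ᵐ x ∂μ, mulDeriv f φ x ^ p = c) : c = 1 := by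
  have hhigher : ∀ j, ∀ᵐ x ∂μ, (mulDeriv f)^[j + 2] φ x ^ p = 1 := by
    intro j
    induction j with
    | zero => exact hf.ae_pow_mulDeriv_eq_one hc
    | succ j ih =>
      rw [show j + 1 + 2 = j + 2 + 1 from rfl, Function.iterate_succ']
      exact hf.ae_pow_mulDeriv_eq_one ih
  have hpoint : ∀ᵐ x ∂μ, c = 1 := by
    filter_upwards [hc, hΔp, ae_all_iff.2 hhigher] with x hcx hpx hjx
    rw [← hcx]
    refine pow_eq_one_of_prod_pow_choose_eq hp (fun j => (mulDeriv f)^[j] φ x) ?_ ?_ hpx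
    · rw [← apply_iterate_eq_prod_pow_choose, hfp]
      rfl
    · intro j hj
      obtain ⟨i, rfl⟩ := Nat.exists_eq_add_of_le' hj
      exact hjx i
  obtain ⟨_, h⟩ := hpoint.exists
  exact h

end MeasureTheory.MeasurePreserving

lemma iterate_eq_nsmul {G X : Type*} [AddMonoid G] {T : G → X → X} (hT0 : T 0 = id)
    (hTadd : ∀ g g', T (g + g') = T g ∘ T g') (g : G) (n : ℕ) : (T g)^[n] = T (n • g) := by
  induction n with
  | zero => simp [hT0]
  | succ n ih => rw [Function.iterate_succ', ih, succ_nsmul', hTadd]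

namespace PhasePoly

variable {G X H : Type*} [CommGroup H] [MeasurableSpace X] {μ : Measure X} {T : G → X → X}

lemma ae_iterate_mulDeriv_eq_one {k : ℕ} {φ : X → H} (h : PhasePoly T μ k φ) (g : G) :
    ∀ᵐ x ∂μ, (mulDeriv (T g))^[k] φ x = 1 := by
  induction k generalizing φ with
  | zero => exact h
  | succ k ih => exact ih (h g)

lemma succ (hT : ∀ g, MeasurePreserving (T g) μ μ) {k : ℕ} {φ : X → H}
    (h : PhasePoly T μ k φ) : PhasePoly T μ (k + 1) φ := by
  induction k generalizing φ with
  | zero => exact fun g => (hT g).ae_mulDeriv_eq_one h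
  | succ k ih => exact fun g => ih (h g)

lemma mono (hT : ∀ g, MeasurePreserving (T g) μ μ) {k j : ℕ} (hkj : k ≤ j) {φ : X → H}
    (h : PhasePoly T μ k φ) : PhasePoly T μ j φ := by
  induction j, hkj using Nat.le_induction with
  | base => exact h
  | succ j _ ih => exact ih.succ hT

end PhasePoly

/-- The constant is killed by `p ^ m`, and by `r` through the binomial expansion along `r • g`. -/
lemma PhasePoly.ae_pow_mulDeriv_eq_one {G X H : Type*} [AddMonoid G] [CommGroup H]
    [MeasurableSpace X] {μ : Measure X} [NeZero μ] {T : G → X → X}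
    (hT : ∀ g, MeasurePreserving (T g) μ μ) (hT0 : T 0 = id)
    (hTadd : ∀ g g', T (g + g') = T g ∘ T g') {p : ℕ} (hp : p.Prime)
    (hG : ∀ g : G, ∃ r : ℕ, r.Coprime p ∧ p • r • g = 0) {m k : ℕ} (hkp : k ≤ p) {F : X → H}
    (hpoly : PhasePoly T μ k F) (hval : ∀ᵐ x ∂μ, F x ^ p ^ m = 1)
    (hderiv : ∀ g, ∃ c, ∀ᵐ x ∂μ, mulDeriv (T g) F x ^ p = c) (g : G) :
    ∀ᵐ x ∂μ, mulDeriv (T g) F x ^ p = 1 := by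
  obtain ⟨c, hc⟩ := hderiv g
  obtain ⟨r, hrp, hrg⟩ := hG g
  have hcr : c ^ r = 1 := by
    have hfp : (T (r • g))^[p] = id := by rw [iterate_eq_nsmul hT0 hTadd, hrg, hT0]
    refine (hT _).eq_one_of_iterate_eq_id hp hfp
      ((hpoly.mono hT hkp).ae_iterate_mulDeriv_eq_one _) ?_
    rw [← iterate_eq_nsmul hT0 hTadd]
    simp_rw [← mulDeriv_pow] at hc ⊢
    exact (hT g).ae_mulDeriv_iterate_eq_pow hc r
  have hcp : c ^ p ^ m = 1 := by
    obtain ⟨x, hcx, hx⟩ := (hc.and ((hT g).ae_pow_mulDeriv_eq_one hval)).exists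
    rw [← hcx, ← pow_mul, mul_comm, pow_mul, hx, one_pow]
  have hc1 : c = 1 := by
    simpa [(hrp.pow_right m).gcd_eq_one] using pow_gcd_eq_one.2 ⟨hcr, hcp⟩
  simpa only [hc1] using hc

lemma IsErgodicAction.ae_eq_const_of_ae_invariant {G X Y : Type*} [MeasurableSpace X]
    {μ : Measure X} [IsProbabilityMeasure μ] {T : G → X → X} (herg : IsErgodicAction T μ)
    [MeasurableSpace Y] [MeasurableSingletonClass Y] {Φ : X → Y} (hΦ : Measurable Φ)
    {S : Set Y} (hS : S.Countable) (hΦS : ∀ᵐ x ∂μ, Φ x ∈ S)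
    (hinv : ∀ g, ∀ᵐ x ∂μ, Φ (T g x) = Φ x) : ∃ c, ∀ᵐ x ∂μ, Φ x = c := by
  have hlevel (y : Y) : μ (Φ ⁻¹' {y}) = 0 ∨ μ (Φ ⁻¹' {y}) = 1 :=
    herg _ (hΦ (measurableSet_singleton y)) fun g =>
      measure_mono_null (fun x hx => show ¬Φ (T g x) = Φ x from fun h => by
        simp only [Set.mem_symmDiff, Set.mem_preimage, Set.mem_singleton_iff, h] at hx
        tauto) (ae_iff.1 (hinv g))
  obtain ⟨y, hy⟩ : ∃ y, μ (Φ ⁻¹' {y}) ≠ 0 := by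
    by_contra! h
    have hnull : ∀ᵐ x ∂μ, x ∉ ⋃ y ∈ S, Φ ⁻¹' {y} :=
      measure_eq_zero_iff_ae_notMem.1 ((measure_biUnion_null_iff hS).2 fun y _ => h y)
    obtain ⟨x, hxS, hx⟩ := (hΦS.and hnull).exists
    exact hx (Set.mem_biUnion hxS rfl)
  refine ⟨y, ae_iff.2 ?_⟩
  exact (prob_compl_eq_zero_iff (hΦ (measurableSet_singleton y))).2 ((hlevel y).resolve_left hy)

lemma Circle.finite_setOf_pow_eq_one {n : ℕ} (hn : n ≠ 0) : {z : Circle | z ^ n = 1}.Finite := by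
  refine ((Polynomial.nthRoots n (1 : ℂ)).toFinset.finite_toSet.preimage
    Circle.coe_injective.injOn).subset fun z hz => ?_
  simp only [Set.mem_preimage, Finset.mem_coe, Multiset.mem_toFinset,
    Polynomial.mem_nthRoots (Nat.pos_of_ne_zero hn)]
  exact (congrArg ((↑) : Circle → ℂ) hz.out).trans Circle.coe_one

lemma Circle.exists_pow_eq {n : ℕ} (hn : n ≠ 0) (c : Circle) : ∃ w : Circle, w ^ n = c := by
  obtain ⟨θ, rfl⟩ := Circle.exp_surjective c
  refine ⟨Circle.exp (θ / n), ?_⟩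
  rw [← Circle.exp_natCast_mul, mul_div_cancel₀ _ (by exact_mod_cast hn)]

theorem PhasePoly.ae_pow_eq_const {G X : Type*} [AddMonoid G] [MeasurableSpace X]
    {μ : Measure X} [IsProbabilityMeasure μ] {T : G → X → X}
    (hT : ∀ g, MeasurePreserving (T g) μ μ) (hT0 : T 0 = id)
    (hTadd : ∀ g g', T (g + g') = T g ∘ T g') (herg : IsErgodicAction T μ) {p : ℕ}
    (hp : p.Prime) (hG : ∀ g : G, ∃ r : ℕ, r.Coprime p ∧ p • r • g = 0) {m k : ℕ} (hkp : k ≤ p)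
    {F : X → Circle} (hF : Measurable F) (hpoly : PhasePoly T μ k F)
    (hval : ∀ᵐ x ∂μ, F x ^ p ^ m = 1) : ∃ c, ∀ᵐ x ∂μ, F x ^ p = c := by
  induction k generalizing F with
  | zero => exact ⟨1, by filter_upwards [hpoly] with x hx; simp [hx]⟩
  | succ k ih =>
    have hderiv (g : G) : ∃ c, ∀ᵐ x ∂μ, mulDeriv (T g) F x ^ p = c :=
      ih (by omega) ((hF.comp (hT g).measurable).mul hF.inv) (hpoly g)
        ((hT g).ae_pow_mulDeriv_eq_one hval)
    refine herg.ae_eq_const_of_ae_invariant (hF.pow_const p)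
      (Circle.finite_setOf_pow_eq_one (pow_ne_zero m hp.ne_zero)).countable ?_ fun g => ?_
    · filter_upwards [hval] with x hx
      rw [← pow_mul, mul_comm, pow_mul, hx, one_pow]
    · filter_upwards [hpoly.ae_pow_mulDeriv_eq_one hT hT0 hTadd hp hG hkp hval hderiv g]
        with x hx
      rwa [← mulDeriv_pow, mulDeriv, mul_inv_eq_one] at hx

lemma DFinsupp.exists_coprime_nsmul_nsmul_eq_zero {I : Type*} {q : I → ℕ}
    (hq : ∀ i, (q i).Prime) {p : ℕ} (hp : p.Prime) (g : Π₀ i, ZMod (q i)) :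
    ∃ r : ℕ, r.Coprime p ∧ p • r • g = 0 := by
  classical
  let r := ∏ i ∈ g.support.filter (q · ≠ p), q i
  refine ⟨r, Nat.Coprime.prod_left fun i hi =>
    (Nat.coprime_primes (hq i) hp).2 (Finset.mem_filter.1 hi).2, ?_⟩
  ext i
  by_cases hgi : g i = 0
  · simp [hgi]
  have hdvd : q i ∣ p * r := by
    by_cases hqi : q i = p
    · exact hqi ▸ dvd_mul_right _ _
    · exact dvd_mul_of_dvd_right
        (Finset.dvd_prod_of_mem q (Finset.mem_filter.2 ⟨DFinsupp.mem_support_iff.2 hgi, hqi⟩)) p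
  rw [DFinsupp.smul_apply, DFinsupp.smul_apply, smul_smul, nsmul_eq_mul,
    (ZMod.natCast_eq_zero_iff _ _).2 hdvd, zero_mul, DFinsupp.zero_apply]

theorem phase_polynomial_high_characteristic_values
    {I : Type*} (q : I → ℕ) (hq : ∀ i, (q i).Prime)
    {X : Type*} [MeasurableSpace X] (μ : Measure X) [IsProbabilityMeasure μ]
    (T : (Π₀ i : I, ZMod (q i)) → X → X)
    (hT : ∀ g, MeasurePreserving (T g) μ μ)
    (hT0 : T 0 = id) (hTadd : ∀ g g', T (g + g') = T g ∘ T g')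
    (herg : IsErgodicAction T μ)
    (k : ℕ) (F : X → Circle) (hFmeas : Measurable F)
    (hFpoly : PhasePoly T μ k F)
    (p : ℕ) (hp : p.Prime) (hpk : k ≤ p)
    (m : ℕ)
    (hval : ∀ᵐ x ∂μ, F x ^ (p ^ m) = 1) :
    ∃ c : Circle, ∀ᵐ x ∂μ, (F x * c⁻¹) ^ p = 1 := by
  obtain ⟨c, hc⟩ := hFpoly.ae_pow_eq_const hT hT0 hTadd herg hp
    (DFinsupp.exists_coprime_nsmul_nsmul_eq_zero hq hp) hpk hFmeas hval
  obtain ⟨w, rfl⟩ := Circle.exists_pow_eq hp.ne_zero c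
  exact ⟨w, by filter_upwards [hc] with x hx; rw [mul_pow, inv_pow, hx, mul_inv_cancel]⟩
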